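/- Let G be a finite 2-group generated by a₁, a₂, a₃ with relations modulo G₃: a₁² ≡ c₁₂, a₂² ≡ c₁₂c₁₃, a₃² ≡ c₁₃, c₂₃ ≡ 1 (mod G₃), and G/G₃ of order 32. Then all weight-3 basic commutators c_{ijk} lie in G₄, hence G₃ = G₄ and (by nilpotency) G₃ = 1, so G has order 32. -/

import Mathlib

/-!
Work in `Q = G / G₄`, where `G₃` is central. A relation `x² ≡ c (mod G₃)` gives
`⁅c, y⁆ = ⁅x², y⁆ = ⁅⁅x, y⁆, x⁆⁻¹ ⁅x, y⁆²` for every `y`. Evaluated at the generators, the three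
square relations turn into equations between the weight-3 commutators `c_{ijk}` and the squares
of `c₁₂, c₁₃, c₂₃`; solving them in the right order forces every `c_{ijk}` to vanish in `Q`.
Then all commutators of `Q` are central, so `G₃ = G₄`, and `G₃ = 1` because `G` is nilpotent.
-/

open scoped commutatorElement
open Subgroup

section Commutators

variable {Q : Type*} [Group Q]

theorem commutatorElement_sq_left (x y : Q) :
    ⁅x ^ 2, y⁆ = ⁅⁅x, y⁆, x⁆⁻¹ * ⁅x, y⁆ ^ 2 := by
  simp only [commutatorElement_def, pow_two, mul_inv_rev, inv_inv]; group

theorem commutatorElement_left_eq_of_mul_inv_mem_center {a b : Q} (h : a * b⁻¹ ∈ center Q)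
    (y : Q) : ⁅a, y⁆ = ⁅b, y⁆ := by
  calc ⁅a, y⁆ = a * b⁻¹ * (b * y * b⁻¹) * (a * b⁻¹)⁻¹ * y⁻¹ := by group
    _ = ⁅b, y⁆ := by rw [← mem_center_iff.mp h]; group

theorem commutatorElement_mul_left_of_mem_center {a b y : Q} (h : ⁅b, y⁆ ∈ center Q) :
    ⁅a * b, y⁆ = ⁅a, y⁆ * ⁅b, y⁆ := by
  calc ⁅a * b, y⁆ = a * ⁅b, y⁆ * a⁻¹ * ⁅a, y⁆ := by group
    _ = ⁅a, y⁆ * ⁅b, y⁆ := by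
      rw [mem_center_iff.mp h a, mul_inv_cancel_right, mem_center_iff.mp h]

theorem commutatorElement_inv_left_of_mem_center {c y : Q} (h : ⁅c, y⁆ ∈ center Q) :
    ⁅c⁻¹, y⁆ = ⁅c, y⁆⁻¹ := by
  calc ⁅c⁻¹, y⁆ = c⁻¹ * ⁅c, y⁆⁻¹ * c := by group
    _ = ⁅c, y⁆⁻¹ := by rw [mem_center_iff.mp (inv_mem h) c⁻¹]; group

theorem commutatorElement_mul_right_of_mem_center {x y z : Q} (h : ⁅x, z⁆ ∈ center Q) :
    ⁅x, y * z⁆ = ⁅x, y⁆ * ⁅x, z⁆ := by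
  calc ⁅x, y * z⁆ = ⁅x, y⁆ * (y * ⁅x, z⁆ * y⁻¹) := by group
    _ = ⁅x, y⁆ * ⁅x, z⁆ := by rw [mem_center_iff.mp h y, mul_inv_cancel_right]

theorem commutatorElement_inv_right_of_mem_center {x y : Q} (h : ⁅x, y⁆ ∈ center Q) :
    ⁅x, y⁻¹⁆ = ⁅x, y⁆⁻¹ := by
  calc ⁅x, y⁻¹⁆ = y⁻¹ * ⁅x, y⁆⁻¹ * y := by group
    _ = ⁅x, y⁆⁻¹ := by rw [mem_center_iff.mp (inv_mem h) y⁻¹]; group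

theorem commutatorElement_eq_of_sq_mul_inv_mem_center {x c : Q} (h : x ^ 2 * c⁻¹ ∈ center Q)
    (y : Q) : ⁅c, y⁆ = ⁅⁅x, y⁆, x⁆⁻¹ * ⁅x, y⁆ ^ 2 := by
  rw [← commutatorElement_left_eq_of_mul_inv_mem_center h, commutatorElement_sq_left]

end Commutators

namespace Subgroup

variable {G : Type*} [Group G]

theorem map_lowerCentralSeries_of_surjective {H : Type*} [Group H] {f : G →* H}
    (hf : Function.Surjective f) (n : ℕ) :
    (lowerCentralSeries (⊤ : Subgroup G) n).map f = lowerCentralSeries ⊤ n := by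
  rw [map_lowerCentralSeries, map_top_of_surjective f hf]

theorem lowerCentralSeries_quotient_eq_bot (n : ℕ) :
    lowerCentralSeries (⊤ : Subgroup (G ⧸ lowerCentralSeries (⊤ : Subgroup G) n)) n = ⊥ := by
  rw [← map_lowerCentralSeries_of_surjective (QuotientGroup.mk'_surjective _), map_eq_bot_iff,
    QuotientGroup.ker_mk']

theorem lowerCentralSeries_le_center {n : ℕ}
    (h : lowerCentralSeries (⊤ : Subgroup G) (n + 1) = ⊥) :
    lowerCentralSeries (⊤ : Subgroup G) n ≤ center G := fun x hx ↦ by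
  refine mem_center_iff.mpr fun g ↦ (commutatorElement_eq_one_iff_commute.mp ?_).eq.symm
  rw [← mem_bot, ← h]
  exact commutator_mem_commutator hx (mem_top g)

theorem commutatorElement_commutatorElement_mem_center
    (h : lowerCentralSeries (⊤ : Subgroup G) 3 = ⊥) (x y z : G) : ⁅⁅x, y⁆, z⁆ ∈ center G :=
  lowerCentralSeries_le_center h <| commutator_mem_commutator
    (commutator_mem_commutator (mem_top x) (mem_top y)) (mem_top z)

theorem commutatorElement_mem_center_of_closure {S : Set G} (hS : closure S = ⊤)
    (h : ∀ x ∈ S, ∀ y ∈ S, ⁅x, y⁆ ∈ center G) (g k : G) : ⁅g, k⁆ ∈ center G := by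
  induction (hS ▸ mem_top g : g ∈ closure S), (hS ▸ mem_top k : k ∈ closure S)
    using closure_induction₂ with
  | mem x y hx hy => exact h x hx y hy
  | one_left => simp
  | one_right => simp
  | mul_left x y z _ _ _ hxz hyz =>
    rw [commutatorElement_mul_left_of_mem_center hyz]; exact mul_mem hxz hyz
  | mul_right y z x _ _ _ hxy hxz =>
    rw [commutatorElement_mul_right_of_mem_center hxz]; exact mul_mem hxy hxz
  | inv_left x y _ _ hxy =>
    rw [commutatorElement_inv_left_of_mem_center hxy]; exact inv_mem hxy
  | inv_right x y _ _ hxy =>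
    rw [commutatorElement_inv_right_of_mem_center hxy]; exact inv_mem hxy

theorem lowerCentralSeries_two_eq_bot_of_closure {S : Set G} (hS : closure S = ⊤)
    (h : ∀ x ∈ S, ∀ y ∈ S, ∀ z ∈ S, ⁅⁅x, y⁆, z⁆ = 1) :
    lowerCentralSeries (⊤ : Subgroup G) 2 = ⊥ := by
  have hcenter : center G = centralizer S := by
    rw [← centralizer_univ, ← coe_top, ← hS, centralizer_closure]
  have hgen (x : G) (hx : x ∈ S) (y : G) (hy : y ∈ S) : ⁅x, y⁆ ∈ center G := by
    rw [hcenter, mem_centralizer_iff]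
    exact fun z hz ↦ (commutatorElement_eq_one_iff_commute.mp (h x hx y hy z hz)).eq.symm
  refine lowerCentralSeries_succ_eq_bot _ (commutator_le.mpr fun g _ k _ ↦ ?_)
  exact commutatorElement_mem_center_of_closure hS hgen g k

theorem lowerCentralSeries_eq_bot_of_eq_succ [Group.IsNilpotent G] {n : ℕ}
    (h : lowerCentralSeries (⊤ : Subgroup G) n = lowerCentralSeries ⊤ (n + 1)) :
    lowerCentralSeries (⊤ : Subgroup G) n = ⊥ := by
  have hconst (k : ℕ) : lowerCentralSeries (⊤ : Subgroup G) (n + k) = lowerCentralSeries ⊤ n := by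
    induction k with
    | zero => rfl
    | succ k ih => rw [← add_assoc, lowerCentralSeries_succ, ih, ← lowerCentralSeries_succ, ← h]
  obtain ⟨m, hm⟩ := nilpotent_iff_lowerCentralSeries.mp ‹_›
  rw [← hconst m, eq_bot_iff, ← hm]
  exact (⊤ : Subgroup G).lowerCentralSeries_antitone (Nat.le_add_left m n)

end Subgroup

structure HallSenior32040Relations {Q : Type*} [Group Q] (N : Subgroup Q) (b₁ b₂ b₃ : Q) :
    Prop where
  sq₁ : b₁ ^ 2 * ⁅b₁, b₂⁆⁻¹ ∈ N
  sq₂ : b₂ ^ 2 * (⁅b₁, b₂⁆ * ⁅b₁, b₃⁆)⁻¹ ∈ N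
  sq₃ : b₃ ^ 2 * ⁅b₁, b₃⁆⁻¹ ∈ N
  comm₂₃ : ⁅b₂, b₃⁆ ∈ N

namespace HallSenior32040Relations

variable {Q : Type*} [Group Q] {N : Subgroup Q} {b₁ b₂ b₃ : Q}

theorem map {R : Type*} [Group R] (h : HallSenior32040Relations N b₁ b₂ b₃) (f : Q →* R)
    {M : Subgroup R} (hNM : N.map f ≤ M) : HallSenior32040Relations M (f b₁) (f b₂) (f b₃) := by
  have hf (x : Q) (hx : x ∈ N) : f x ∈ M := hNM (mem_map_of_mem f hx)
  refine ⟨?_, ?_, ?_, ?_⟩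
  · simpa only [map_mul, map_inv, map_pow, map_commutatorElement] using hf _ h.sq₁
  · simpa only [map_mul, map_inv, map_pow, map_commutatorElement] using hf _ h.sq₂
  · simpa only [map_mul, map_inv, map_pow, map_commutatorElement] using hf _ h.sq₃
  · simpa only [map_commutatorElement] using hf _ h.comm₂₃

theorem commutatorElement_commutatorElement_eq_one
    (hQ : ∀ x y z : Q, ⁅⁅x, y⁆, z⁆ ∈ center Q) (h : HallSenior32040Relations (center Q) b₁ b₂ b₃) :
    ⁅⁅b₁, b₂⁆, b₁⁆ = 1 ∧ ⁅⁅b₁, b₂⁆, b₂⁆ = 1 ∧ ⁅⁅b₁, b₂⁆, b₃⁆ = 1 ∧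
    ⁅⁅b₁, b₃⁆, b₁⁆ = 1 ∧ ⁅⁅b₁, b₃⁆, b₂⁆ = 1 ∧ ⁅⁅b₁, b₃⁆, b₃⁆ = 1 := by
  obtain ⟨h₁, h₂, h₃, h₂₃⟩ := h
  have swap (x y z : Q) : ⁅⁅y, x⁆, z⁆ = ⁅⁅x, y⁆, z⁆⁻¹ := by
    rw [← commutatorElement_inv x y, commutatorElement_inv_left_of_mem_center (hQ x y z)]
  -- `eᵢ y` evaluates `⁅cᵢ, y⁆` through the relation `bᵢ ^ 2 ≡ cᵢ`; `cᵢⱼₖ` is `⁅⁅bᵢ, bⱼ⁆, bₖ⁆`.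
  have e₁ := commutatorElement_eq_of_sq_mul_inv_mem_center h₁
  have e₂ (y : Q) : ⁅⁅b₁, b₂⁆, y⁆ * ⁅⁅b₁, b₃⁆, y⁆ = ⁅⁅b₂, y⁆, b₂⁆⁻¹ * ⁅b₂, y⁆ ^ 2 := by
    rw [← commutatorElement_mul_left_of_mem_center (hQ _ _ _)]
    exact commutatorElement_eq_of_sq_mul_inv_mem_center h₂ y
  have e₃ := commutatorElement_eq_of_sq_mul_inv_mem_center h₃
  have c₂₃ (y : Q) : ⁅⁅b₂, b₃⁆, y⁆ = 1 :=
    commutatorElement_eq_one_iff_commute.mpr (mem_center_iff.mp h₂₃ y).symm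
  have c₁₂₁ : ⁅⁅b₁, b₂⁆, b₁⁆ = 1 := by simpa using e₁ b₁
  have c₁₃₃ : ⁅⁅b₁, b₃⁆, b₃⁆ = 1 := by simpa using e₃ b₃
  have c₁₂₂_eq : ⁅⁅b₁, b₂⁆, b₂⁆ = ⁅b₁, b₂⁆ ^ 2 := by simpa [c₁₂₁] using e₁ b₂
  have c₁₃₁ : ⁅⁅b₁, b₃⁆, b₁⁆ = 1 := by
    have e := e₂ b₁
    rw [swap b₁ b₂, ← commutatorElement_inv b₁ b₂, c₁₂₁, c₁₂₂_eq] at e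
    simpa only [one_mul, inv_inv, inv_pow, mul_inv_cancel] using e
  have c₁₃_sq : ⁅b₁, b₃⁆ ^ 2 = 1 := by
    have e := e₃ b₁
    rw [swap b₁ b₃, ← commutatorElement_inv b₁ b₃, c₁₃₁, c₁₃₃, inv_one, inv_one, one_mul, inv_pow,
      eq_comm, inv_eq_one] at e
    exact e
  have c₁₂₃ : ⁅⁅b₁, b₂⁆, b₃⁆ = 1 := by simpa [c₁₃₁, c₁₃_sq] using e₁ b₃
  have c₂₃_sq : ⁅b₂, b₃⁆ ^ 2 = 1 := by simpa [c₂₃, c₁₂₃, c₁₃₃, eq_comm] using e₂ b₃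
  have c₁₃₂ : ⁅⁅b₁, b₃⁆, b₂⁆ = 1 := by
    have e := e₃ b₂
    rw [swap b₂ b₃, ← commutatorElement_inv b₂ b₃, c₂₃] at e
    simpa only [inv_one, one_mul, inv_pow, c₂₃_sq] using e
  have c₁₂₂ : ⁅⁅b₁, b₂⁆, b₂⁆ = 1 := by simpa [c₁₃₂] using e₂ b₂
  exact ⟨c₁₂₁, c₁₂₂, c₁₂₃, c₁₃₁, c₁₃₂, c₁₃₃⟩

theorem commutatorElement_commutatorElement_eq_one_of_mem
    (hQ : ∀ x y z : Q, ⁅⁅x, y⁆, z⁆ ∈ center Q) (h : HallSenior32040Relations (center Q) b₁ b₂ b₃) :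
    ∀ x ∈ ({b₁, b₂, b₃} : Set Q), ∀ y ∈ ({b₁, b₂, b₃} : Set Q), ∀ z ∈ ({b₁, b₂, b₃} : Set Q),
      ⁅⁅x, y⁆, z⁆ = 1 := by
  obtain ⟨c₁₂₁, c₁₂₂, c₁₂₃, c₁₃₁, c₁₃₂, c₁₃₃⟩ := h.commutatorElement_commutatorElement_eq_one hQ
  have c₂₃ (z : Q) : ⁅⁅b₂, b₃⁆, z⁆ = 1 :=
    commutatorElement_eq_one_iff_commute.mpr (mem_center_iff.mp h.comm₂₃ z).symm
  have swap {x y z : Q} (hxyz : ⁅⁅x, y⁆, z⁆ = 1) : ⁅⁅y, x⁆, z⁆ = 1 := by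
    rw [← commutatorElement_inv x y, commutatorElement_inv_left_of_mem_center (hQ x y z), hxyz,
      inv_one]
  simp only [Set.mem_insert_iff, Set.mem_singleton_iff]
  rintro x (rfl | rfl | rfl) y (rfl | rfl | rfl) z (rfl | rfl | rfl) <;>
    first | simp | assumption | exact c₂₃ _ | exact swap ‹_› | exact swap (c₂₃ _)

end HallSenior32040Relations

/-- Let `G` be a finite 2-group generated by `a₁, a₂, a₃` with relations modulo `G₃`:
`a₁² ≡ c₁₂`, `a₂² ≡ c₁₂c₁₃`, `a₃² ≡ c₁₃`, `c₂₃ ≡ 1`, and `G/G₃` of order 32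
(Hall–Senior group 32.040). Then all weight-3 basic commutators `c_{ijk}` lie in `G₄`,
hence `G₃ = G₄`, so by nilpotency `G₃ = 1` and `G` has order 32. -/
theorem group_32_040_rigid {G : Type*} [Group G] [Finite G] (hp : IsPGroup 2 G)
    (a₁ a₂ a₃ : G) (hgen : Subgroup.closure {a₁, a₂, a₃} = (⊤ : Subgroup G))
    (h1 : a₁ ^ 2 * (⁅a₁, a₂⁆)⁻¹ ∈ Subgroup.lowerCentralSeries (⊤ : Subgroup G) 2)
    (h2 : a₂ ^ 2 * (⁅a₁, a₂⁆ * ⁅a₁, a₃⁆)⁻¹ ∈ Subgroup.lowerCentralSeries (⊤ : Subgroup G) 2)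
    (h3 : a₃ ^ 2 * (⁅a₁, a₃⁆)⁻¹ ∈ Subgroup.lowerCentralSeries (⊤ : Subgroup G) 2)
    (h23 : ⁅a₂, a₃⁆ ∈ Subgroup.lowerCentralSeries (⊤ : Subgroup G) 2)
    (hcard : Nat.card (G ⧸ Subgroup.lowerCentralSeries (⊤ : Subgroup G) 2) = 32) :
    (∀ x y z : G, x ∈ ({a₁, a₂, a₃} : Set G) → y ∈ ({a₁, a₂, a₃} : Set G) →
      z ∈ ({a₁, a₂, a₃} : Set G) → ⁅⁅x, y⁆, z⁆ ∈ Subgroup.lowerCentralSeries (⊤ : Subgroup G) 3) ∧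
    Subgroup.lowerCentralSeries (⊤ : Subgroup G) 2 = Subgroup.lowerCentralSeries (⊤ : Subgroup G) 3 ∧
    Subgroup.lowerCentralSeries (⊤ : Subgroup G) 2 = ⊥ ∧ Nat.card G = 32 := by
  set K := (⊤ : Subgroup G).lowerCentralSeries 3
  let π := QuotientGroup.mk' K
  have hπ : Function.Surjective π := QuotientGroup.mk'_surjective K
  have hQ : (⊤ : Subgroup (G ⧸ K)).lowerCentralSeries 3 = ⊥ := lowerCentralSeries_quotient_eq_bot 3
  have hrel : HallSenior32040Relations (center (G ⧸ K)) (π a₁) (π a₂) (π a₃) :=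
    HallSenior32040Relations.map ⟨h1, h2, h3, h23⟩ π <| by
      rw [map_lowerCentralSeries_of_surjective hπ]; exact lowerCentralSeries_le_center hQ
  have hS : π '' {a₁, a₂, a₃} = {π a₁, π a₂, π a₃} := by
    simp only [Set.image_insert_eq, Set.image_singleton]
  have hvanish := hS ▸ hrel.commutatorElement_commutatorElement_eq_one_of_mem
    (commutatorElement_commutatorElement_mem_center hQ)
  have hQ2 : (⊤ : Subgroup (G ⧸ K)).lowerCentralSeries 2 = ⊥ :=
    lowerCentralSeries_two_eq_bot_of_closure
      (by rw [← MonoidHom.map_closure, hgen, map_top_of_surjective π hπ]) hvanish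
  have hstable : (⊤ : Subgroup G).lowerCentralSeries 2 = K := by
    refine le_antisymm ?_ ((⊤ : Subgroup G).lowerCentralSeries_antitone (by norm_num))
    rw [← QuotientGroup.ker_mk' K, ← Subgroup.map_eq_bot_iff,
      map_lowerCentralSeries_of_surjective hπ, hQ2]
  have := hp.isNilpotent
  have hbot := lowerCentralSeries_eq_bot_of_eq_succ hstable
  refine ⟨fun x y z hx hy hz ↦ ?_, hstable, hbot, ?_⟩
  · rw [← QuotientGroup.ker_mk' K, MonoidHom.mem_ker, map_commutatorElement, map_commutatorElement]
    exact hvanish _ (Set.mem_image_of_mem π hx) _ (Set.mem_image_of_mem π hy) _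
      (Set.mem_image_of_mem π hz)
  · rwa [hbot, Nat.card_congr (QuotientGroup.quotientBot (G := G)).toEquiv] at hcard
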